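/- Let Σ ⊂ ℝ^d = ℝ^{d−1} × ℝ be a cylindric set with base Π ⊂ ℝ^{d−1} of positive Lebesgue measure, and let Γ ⊂ ℝ^{d−1} be a countable set such that E(Γ) is a Riesz basis in L²(Π). Then there exists a constant M = M(Π, Γ) such that for every family of scalars (c(γ,n))_{(γ,n) ∈ Γ × ℤ} with only finitely many nonzero elements, ∑_{(γ,n)} |c(γ,n)|² ≤ M ‖∑_{(γ,n)} c(γ,n) e_{(γ,n)}‖²_{L²(Σ)}, where e_{(γ,n)}(x,y) = e^{2πi⟨γ,x⟩} e^{2πi n y}. -/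

import Mathlib

open MeasureTheory Complex
open scoped RealInnerProductSpace Pointwise

noncomputable section

/-- A family of vectors in a Hilbert space is a *Riesz basis* if it is the image of an
orthonormal (Hilbert) basis under a bounded invertible linear operator. -/
def IsRieszBasis {H : Type*} [NormedAddCommGroup H] [InnerProductSpace ℂ H] {ι : Type*}
    (f : ι → H) : Prop :=
  ∃ (e : HilbertBasis ι ℂ H) (T : H ≃L[ℂ] H), ∀ i, f i = T (e i)

/-- The exponential function `e_λ(x) = e^{2πi⟨λ,x⟩}` on `ℝ^d`. -/
def expFun {d : ℕ} (l : EuclideanSpace ℝ (Fin d)) : EuclideanSpace ℝ (Fin d) → ℂ :=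
  fun x => Complex.exp (2 * Real.pi * Complex.I * ((⟪ l, x ⟫ : ℝ) : ℂ))

open scoped Classical in
/-- The exponential `e_λ` regarded as an element of `L²(Ω)`. -/
def expLp {d : ℕ} (Ω : Set (EuclideanSpace ℝ (Fin d))) (l : EuclideanSpace ℝ (Fin d)) :
    Lp ℂ 2 (volume.restrict Ω) :=
  if h : MemLp (expFun l) 2 (volume.restrict Ω) then h.toLp _ else 0

/-- A cylindric set `S ⊆ ℝ^{m} × ℝ` with base `B ⊆ ℝ^{m}`: over every point of the
bounded measurable base `B`, the fiber of `S` is an interval `[φ x, φ x + 1]` of length one,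
where `φ` is a bounded measurable function on `B`. -/
def IsCylindric {m : ℕ} (S : Set (EuclideanSpace ℝ (Fin m) × ℝ))
    (B : Set (EuclideanSpace ℝ (Fin m))) : Prop :=
  Bornology.IsBounded S ∧ MeasurableSet S ∧ Bornology.IsBounded B ∧ MeasurableSet B ∧
    ∃ φ : EuclideanSpace ℝ (Fin m) → ℝ, Measurable φ ∧ (∃ C : ℝ, ∀ x ∈ B, |φ x| ≤ C) ∧
      S = {p | p.1 ∈ B ∧ φ p.1 ≤ p.2 ∧ p.2 ≤ φ p.1 + 1}

open scoped Classical in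
/-- The exponential `e_{(γ,n)}(x,y) = e^{2πi⟨γ,x⟩} e^{2πiny}` as an element of `L²(S)`,
for `S ⊆ ℝ^{m} × ℝ`. -/
def expLpProd {m : ℕ} (S : Set (EuclideanSpace ℝ (Fin m) × ℝ))
    (γ : EuclideanSpace ℝ (Fin m)) (n : ℤ) : Lp ℂ 2 (volume.restrict S) :=
  if h : MemLp (fun p : EuclideanSpace ℝ (Fin m) × ℝ =>
      Complex.exp (2 * Real.pi * Complex.I * (((⟪ γ, p.1 ⟫ : ℝ) + (n : ℝ) * p.2 : ℝ) : ℂ)))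
      2 (volume.restrict S)
  then h.toLp _ else 0

/-!
Every vertical fibre of a cylindric set `S` over `B` is an interval of length one, on which the
characters `y ↦ e^{2πiny}` are orthonormal. By Fubini this gives
`⟪e_{(γ,n)}, e_{(γ',n')}⟫_{L²(S)} = δ_{nn'} ⟪e_γ, e_γ'⟫_{L²(B)}`, so that
`‖∑ c(γ,n) e_{(γ,n)}‖²_{L²(S)} = ∑ₙ ‖∑_γ c(γ,n) e_γ‖²_{L²(B)}`. The lower Riesz bound of `E(Γ)`,
applied for each `n` separately, then yields the claim with `M = ‖T⁻¹‖²`.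
-/

open scoped Real

theorem IsRieszBasis.exists_sum_norm_sq_le {H : Type*} [NormedAddCommGroup H]
    [InnerProductSpace ℂ H] {ι : Type*} {f : ι → H} (hf : IsRieszBasis f) :
    ∃ A : ℝ, ∀ (s : Finset ι) (a : ι → ℂ),
      ∑ i ∈ s, ‖a i‖ ^ 2 ≤ A * ‖∑ i ∈ s, a i • f i‖ ^ 2 := by
  obtain ⟨e, T, hT⟩ := hf
  refine ⟨‖(T.symm : H →L[ℂ] H)‖ ^ 2, fun s a => ?_⟩
  have hpyth : ‖∑ i ∈ s, a i • e i‖ ^ 2 = ∑ i ∈ s, ‖a i‖ ^ 2 := by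
    rw [← inner_self_eq_norm_sq (𝕜 := ℂ), e.orthonormal.inner_sum]
    simp only [conj_mul', map_sum, RCLike.re_to_complex]
    norm_cast
  have hmap : ∑ i ∈ s, a i • f i = T (∑ i ∈ s, a i • e i) := by simp [hT]
  calc ∑ i ∈ s, ‖a i‖ ^ 2 = ‖T.symm (T (∑ i ∈ s, a i • e i))‖ ^ 2 := by simp [hpyth]
    _ ≤ (‖(T.symm : H →L[ℂ] H)‖ * ‖∑ i ∈ s, a i • f i‖) ^ 2 := by
      rw [hmap]
      exact pow_le_pow_left₀ (norm_nonneg _) ((T.symm : H →L[ℂ] H).le_opNorm _) 2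
    _ = _ := mul_pow _ _ _

theorem norm_sq_sum_product_eq_of_inner_eq_ite {𝕜 E F ι κ : Type*} [RCLike 𝕜]
    [NormedAddCommGroup E] [InnerProductSpace 𝕜 E] [NormedAddCommGroup F] [InnerProductSpace 𝕜 F]
    [DecidableEq κ] {f : ι → E} {g : ι × κ → F}
    (hg : ∀ i j n k, inner 𝕜 (g (i, n)) (g (j, k)) = if n = k then inner 𝕜 (f i) (f j) else 0)
    (t : Finset ι) (u : Finset κ) (c : ι × κ → 𝕜) :
    ‖∑ q ∈ t ×ˢ u, c q • g q‖ ^ 2 = ∑ n ∈ u, ‖∑ i ∈ t, c (i, n) • f i‖ ^ 2 := by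
  have : ((‖∑ q ∈ t ×ˢ u, c q • g q‖ : ℝ) : 𝕜) ^ 2 =
      ∑ n ∈ u, ((‖∑ i ∈ t, c (i, n) • f i‖ : ℝ) : 𝕜) ^ 2 := by
    simp only [← inner_self_eq_norm_sq_to_K (𝕜 := 𝕜), Finset.sum_product_right, sum_inner,
      inner_sum, inner_smul_left, inner_smul_right, hg, mul_ite, mul_zero, Finset.sum_ite_irrel,
      Finset.sum_const_zero]
    refine Finset.sum_congr rfl fun n hn => ?_
    simp only [Finset.sum_ite_eq', hn, if_true]
  exact_mod_cast this

theorem norm_exp_two_pi_I_mul_ofReal (r : ℝ) : ‖exp (2 * π * I * r)‖ = 1 := by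
  rw [show 2 * π * I * r = ((2 * π * r : ℝ) : ℂ) * I by push_cast; ring]
  exact norm_exp_ofReal_mul_I _

theorem exp_two_pi_I_mul_mul_conj (r s : ℝ) :
    exp (2 * π * I * s) * (starRingEnd ℂ) (exp (2 * π * I * r)) =
      exp (2 * π * I * (s - r : ℝ)) := by
  rw [← exp_conj, ← exp_add]
  congr 1
  simp only [map_mul, conj_I, conj_ofReal, map_ofNat]
  push_cast
  ring

theorem memLp_restrict_of_continuous_of_norm_le {α E : Type*} [MeasurableSpace α]
    [TopologicalSpace α] [OpensMeasurableSpace α] [SecondCountableTopology α]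
    [NormedAddCommGroup E] {μ : Measure α} {s : Set α} (hs : μ s ≠ ⊤) {f : α → E}
    (hf : Continuous f) {C : ℝ} (hC : ∀ x, ‖f x‖ ≤ C) (p : ENNReal) :
    MemLp f p (μ.restrict s) :=
  have : IsFiniteMeasure (μ.restrict s) := isFiniteMeasure_restrict.2 hs
  .of_bound hf.aestronglyMeasurable C (.of_forall hC)

theorem MeasureTheory.MemLp.inner_toLp_toLp {α 𝕜 E : Type*} [MeasurableSpace α] [RCLike 𝕜]
    [NormedAddCommGroup E] [InnerProductSpace 𝕜 E] {μ : Measure α} {f g : α → E}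
    (hf : MemLp f 2 μ) (hg : MemLp g 2 μ) :
    inner 𝕜 (hf.toLp f) (hg.toLp g) = ∫ a, inner 𝕜 (f a) (g a) ∂μ := by
  rw [L2.inner_def]
  refine integral_congr_ae ?_
  filter_upwards [hf.coeFn_toLp, hg.coeFn_toLp] with a hfa hga
  rw [hfa, hga]

theorem setIntegral_exp_two_pi_I_int_mul_Icc (k : ℤ) (a : ℝ) :
    ∫ y in Set.Icc a (a + 1), exp (2 * π * I * ((k * y : ℝ) : ℂ)) = if k = 0 then 1 else 0 := by
  rw [integral_Icc_eq_integral_Ioc, ← intervalIntegral.integral_of_le (by linarith)]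
  split_ifs with hk
  · simp [hk]
  have hc : 2 * π * I * k ≠ 0 := by simp [Real.pi_ne_zero, hk]
  have hperiod : exp (2 * π * I * k * (a + 1 : ℝ)) = exp (2 * π * I * k * a) := by
    rw [ofReal_add, ofReal_one, mul_add, exp_add, mul_one,
      show 2 * π * I * k = k * (2 * π * I) by ring, exp_int_mul_two_pi_mul_I, mul_one]
  simp_rw [ofReal_mul, ofReal_intCast, ← mul_assoc]
  rw [integral_exp_mul_complex hc, hperiod, sub_self, zero_div]

theorem MeasureTheory.setIntegral_prod_eq_integral_setIntegral_preimage {α β E : Type*}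
    [MeasurableSpace α] [MeasurableSpace β] [NormedAddCommGroup E] [NormedSpace ℝ E]
    {μ : Measure α} {ν : Measure β} [SFinite μ] [SFinite ν] {S : Set (α × β)}
    (hS : MeasurableSet S) {F : α × β → E} (hF : IntegrableOn F S (μ.prod ν)) :
    ∫ p in S, F p ∂μ.prod ν = ∫ x, ∫ y in Prod.mk x ⁻¹' S, F (x, y) ∂ν ∂μ := by
  rw [← integral_indicator hS, integral_prod _ ((integrable_indicator_iff hS).2 hF)]
  congr 1 with x
  rw [← integral_indicator (measurable_prodMk_left hS)]
  rfl

theorem expFun_mul_conj_expFun {d : ℕ} (l l' x : EuclideanSpace ℝ (Fin d)) :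
    expFun l' x * (starRingEnd ℂ) (expFun l x) = expFun (l' - l) x := by
  rw [expFun, expFun, exp_two_pi_I_mul_mul_conj, expFun, inner_sub_left]

section Cylinder

variable {m : ℕ} {S : Set (EuclideanSpace ℝ (Fin m) × ℝ)} {B : Set (EuclideanSpace ℝ (Fin m))}

theorem IsCylindric.setIntegral_mul_exp (hcyl : IsCylindric S B)
    {h : EuclideanSpace ℝ (Fin m) → ℂ} (k : ℤ)
    (hint : IntegrableOn (fun p => h p.1 * exp (2 * π * I * ((k * p.2 : ℝ) : ℂ))) S) :
    ∫ p in S, h p.1 * exp (2 * π * I * ((k * p.2 : ℝ) : ℂ)) =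
      if k = 0 then ∫ x in B, h x else 0 := by
  obtain ⟨-, hSm, -, hBm, φ, -, -, rfl⟩ := hcyl
  rw [Measure.volume_eq_prod] at hint ⊢
  rw [setIntegral_prod_eq_integral_setIntegral_preimage hSm hint]
  have hfiber : ∀ x, ∫ y in Prod.mk x ⁻¹' {p | p.1 ∈ B ∧ φ p.1 ≤ p.2 ∧ p.2 ≤ φ p.1 + 1},
      h x * exp (2 * π * I * ((k * y : ℝ) : ℂ)) =
      B.indicator (fun x => if k = 0 then h x else 0) x := by
    intro x
    by_cases hx : x ∈ B
    · have : Prod.mk x ⁻¹' {p | p.1 ∈ B ∧ φ p.1 ≤ p.2 ∧ p.2 ≤ φ p.1 + 1} =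
          Set.Icc (φ x) (φ x + 1) := by ext; simp [hx]
      rw [this, integral_const_mul, setIntegral_exp_two_pi_I_int_mul_Icc, Set.indicator_of_mem hx]
      split_ifs <;> simp
    · have : Prod.mk x ⁻¹' {p | p.1 ∈ B ∧ φ p.1 ≤ p.2 ∧ p.2 ≤ φ p.1 + 1} = ∅ := by
        ext; simp [hx]
      rw [this, setIntegral_empty, Set.indicator_of_notMem hx]
  simp_rw [hfiber]
  rw [integral_indicator hBm]
  split_ifs <;> simp

theorem inner_expLpProd_expLpProd (hcyl : IsCylindric S B) (γ γ' : EuclideanSpace ℝ (Fin m))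
    (n n' : ℤ) :
    inner ℂ (expLpProd S γ n) (expLpProd S γ' n') =
      if n = n' then inner ℂ (expLp B γ) (expLp B γ') else 0 := by
  have hmemS : ∀ γ (n : ℤ), MemLp (fun p : EuclideanSpace ℝ (Fin m) × ℝ =>
      exp (2 * π * I * (((⟪γ, p.1⟫ : ℝ) + (n : ℝ) * p.2 : ℝ) : ℂ))) 2 (volume.restrict S) :=
    fun γ n => memLp_restrict_of_continuous_of_norm_le hcyl.1.measure_lt_top.ne (by fun_prop)
      (fun _ => (norm_exp_two_pi_I_mul_ofReal _).le) 2
  have hmemB : ∀ γ, MemLp (expFun γ) 2 (volume.restrict B) :=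
    fun γ => memLp_restrict_of_continuous_of_norm_le hcyl.2.2.1.measure_lt_top.ne (by fun_prop)
      (fun _ => (norm_exp_two_pi_I_mul_ofReal _).le) 2
  have hsplit : ∀ p : EuclideanSpace ℝ (Fin m) × ℝ,
      exp (2 * π * I * (((⟪γ', p.1⟫ : ℝ) + (n' : ℝ) * p.2 : ℝ) : ℂ)) *
        (starRingEnd ℂ) (exp (2 * π * I * (((⟪γ, p.1⟫ : ℝ) + (n : ℝ) * p.2 : ℝ) : ℂ))) =
      expFun (γ' - γ) p.1 * exp (2 * π * I * ((((n' - n : ℤ) : ℝ) * p.2 : ℝ) : ℂ)) := by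
    intro p
    rw [exp_two_pi_I_mul_mul_conj, expFun, ← Complex.exp_add, inner_sub_left]
    congr 1
    push_cast
    ring
  rw [expLpProd, expLpProd, dif_pos (hmemS γ n), dif_pos (hmemS γ' n'), MemLp.inner_toLp_toLp,
    expLp, expLp, dif_pos (hmemB γ), dif_pos (hmemB γ'), MemLp.inner_toLp_toLp]
  have hint : IntegrableOn (fun p : EuclideanSpace ℝ (Fin m) × ℝ => expFun (γ' - γ) p.1 *
      exp (2 * π * I * ((((n' - n : ℤ) : ℝ) * p.2 : ℝ) : ℂ))) S :=
    memLp_one_iff_integrable.1 <| memLp_restrict_of_continuous_of_norm_le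
      hcyl.1.measure_lt_top.ne (by simp only [expFun]; fun_prop)
      (fun _ => by rw [norm_mul, expFun, norm_exp_two_pi_I_mul_ofReal,
        norm_exp_two_pi_I_mul_ofReal, one_mul]) 1
  simp_rw [RCLike.inner_apply, hsplit, expFun_mul_conj_expFun]
  rw [hcyl.setIntegral_mul_exp _ hint]
  simp only [sub_eq_zero, eq_comm]

end Cylinder

theorem cylindric_interpolation_bound_general
    (m : ℕ) (S : Set (EuclideanSpace ℝ (Fin m) × ℝ)) (B : Set (EuclideanSpace ℝ (Fin m)))
    (hcyl : IsCylindric S B)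
    (Γ : Set (EuclideanSpace ℝ (Fin m)))
    (hbasis : IsRieszBasis (fun γ : Γ => expLp B (γ : EuclideanSpace ℝ (Fin m)))) :
    ∃ M : ℝ, ∀ (c : Γ × ℤ → ℂ) (hc : (Function.support c).Finite),
      ∑ q ∈ hc.toFinset, ‖c q‖ ^ 2 ≤
        M * ‖∑ q ∈ hc.toFinset, c q • expLpProd S (q.1 : EuclideanSpace ℝ (Fin m)) q.2‖ ^ 2 := by
  classical
  obtain ⟨M, hM⟩ := hbasis.exists_sum_norm_sq_le
  refine ⟨M, fun c hc => ?_⟩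
  set t := hc.toFinset.image Prod.fst
  set u := hc.toFinset.image Prod.snd
  have hsub : hc.toFinset ⊆ t ×ˢ u := fun q hq =>
    Finset.mem_product.2 ⟨Finset.mem_image_of_mem _ hq, Finset.mem_image_of_mem _ hq⟩
  have hvanish : ∀ q ∉ hc.toFinset, c q = 0 := fun q hq => by simpa using hq
  rw [Finset.sum_subset hsub fun q _ hq => by simp [hvanish q hq],
    Finset.sum_subset hsub fun q _ hq => by simp [hvanish q hq],
    norm_sq_sum_product_eq_of_inner_eq_ite (f := fun γ : Γ => expLp B γ)
      (g := fun q : Γ × ℤ => expLpProd S q.1 q.2) fun γ γ' => inner_expLpProd_expLpProd hcyl γ γ',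
    Finset.sum_product_right, Finset.mul_sum]
  exact Finset.sum_le_sum fun n _ => hM t fun γ => c (γ, n)

theorem cylindric_interpolation_bound
    (m : ℕ) (S : Set (EuclideanSpace ℝ (Fin m) × ℝ)) (B : Set (EuclideanSpace ℝ (Fin m)))
    (hcyl : IsCylindric S B) (hB : 0 < volume B)
    (Γ : Set (EuclideanSpace ℝ (Fin m))) (hΓ : Γ.Countable)
    (hbasis : IsRieszBasis (fun γ : Γ => expLp B (γ : EuclideanSpace ℝ (Fin m)))) :
    ∃ M : ℝ, ∀ (c : Γ × ℤ → ℂ) (hc : (Function.support c).Finite),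
      ∑ q ∈ hc.toFinset, ‖c q‖ ^ 2 ≤
        M * ‖∑ q ∈ hc.toFinset, c q • expLpProd S (q.1 : EuclideanSpace ℝ (Fin m)) q.2‖ ^ 2 :=
  cylindric_interpolation_bound_general m S B hcyl Γ hbasis
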